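/- arXiv:2407.12595 — 2 statements merged into one kernel-verified Lean document; each statement's English description precedes it below -/
import Mathlib

section
/- Let Ḡ be an orientation of a finite undirected simple graph G=(V,E) satisfying Invariant 1, let {u,v} ∉ E with odeg(u,Ḡ) ≤ odeg(v,Ḡ), and let G̃ be the orientation of G + {u,v} obtained from Ḡ by adding the directed edge (u,v). Then there exists an orientation of G + {u,v} satisfying Invariant 1 that is either G̃ itself or is obtained from G̃ by flipping a single improving path starting at u. In particular, after inserting one edge, at most one improving-path flip restores an optimal orientation satisfying Invariant 1. -/
open Finset

/-- An orientation of a simple graph `G`: a choice, for each edge `{u,v}` of `G`,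
of exactly one of the directed edges `(u,v)`, `(v,u)`. -/
structure GraphOrientation {V : Type*} (G : SimpleGraph V) where
  dir : V → V → Bool
  dir_adj : ∀ u v, dir u v = true → G.Adj u v
  exactly_one : ∀ u v, G.Adj u v → (dir u v = true ↔ ¬ dir v u = true)

/-- Out-degree of `v` w.r.t. a directed-edge relation `d`. -/
def outDegF {V : Type*} [Fintype V] (d : V → V → Bool) (v : V) : ℕ :=
  (Finset.univ.filter fun w => d v w = true).card

/-- Out-degree of a vertex in an orientation. -/
def GraphOrientation.outDeg {V : Type*} [Fintype V] {G : SimpleGraph V}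
    (o : GraphOrientation G) (v : V) : ℕ := outDegF o.dir v

/-- Maximum out-degree `Δ` of an orientation. -/
def GraphOrientation.maxOutDeg {V : Type*} [Fintype V] {G : SimpleGraph V}
    (o : GraphOrientation G) : ℕ := Finset.univ.sup o.outDeg

/-- `|E(S)|`: the number of edges of `G` with both endpoints in `S`. -/
def edgeCount {V : Type*} [Fintype V] [DecidableEq V] (G : SimpleGraph V)
    [DecidableRel G.Adj] (S : Finset V) : ℕ :=
  (G.edgeFinset.filter fun e => ∀ x ∈ e, x ∈ S).card

/-- A directed path in an orientation: a list of distinct vertices, of length at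
least two (i.e. `k ≥ 1` edges), with consecutive vertices joined by directed edges. -/
def IsDirPath {V : Type*} {G : SimpleGraph V} (o : GraphOrientation G) (p : List V) : Prop :=
  p.Nodup ∧ 2 ≤ p.length ∧ List.Chain' (fun a b => o.dir a b = true) p

/-- A directed path from `a` to `b`. -/
def IsPathFrom {V : Type*} {G : SimpleGraph V} (o : GraphOrientation G)
    (p : List V) (a b : V) : Prop :=
  IsDirPath o p ∧ p.head? = some a ∧ p.getLast? = some b

/-- Invariant 1: there is no improving path between any two vertices, i.e. no directed
path `⟨a,…,b⟩` with `odeg(a) > odeg(b) + 1`. -/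
def Invariant1 {V : Type*} [Fintype V] {G : SimpleGraph V} (o : GraphOrientation G) : Prop :=
  ∀ p a b, IsPathFrom o p a b → o.outDeg a ≤ o.outDeg b + 1

/-- Invariant 2: there is no improving path starting at a vertex of maximum out-degree. -/
def Invariant2 {V : Type*} [Fintype V] {G : SimpleGraph V} (o : GraphOrientation G) : Prop :=
  ∀ p a b, IsPathFrom o p a b → o.outDeg a = o.maxOutDeg → o.outDeg a ≤ o.outDeg b + 1

/-- Flipping the directed path `p`: every directed edge `(v_i, v_{i+1})` of `p`
is replaced by the reversed edge `(v_{i+1}, v_i)`; all other edges are unchanged. -/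
def flipDir {V : Type*} [DecidableEq V] (d : V → V → Bool) (p : List V) : V → V → Bool :=
  fun a b => if (a, b) ∈ p.zip p.tail ∨ (b, a) ∈ p.zip p.tail then d b a else d a b

/-- `G + {u,v}`: the graph obtained from `G` by inserting the edge `{u,v}`. -/
def addE {V : Type*} (G : SimpleGraph V) (u v : V) : SimpleGraph V :=
  G ⊔ SimpleGraph.fromEdgeSet {s(u, v)}

/-- `G − {u,v}`: the graph obtained from `G` by deleting the edge `{u,v}`. -/
def delE {V : Type*} (G : SimpleGraph V) (u v : V) : SimpleGraph V :=
  G.deleteEdges {s(u, v)}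

/-!
Inserting `(u,v)` raises only `odeg u`, by one, and since `odeg u ≤ odeg v`, every vertex `x`
reachable from `u` afterwards has `odeg u ≤ odeg x + 1`. If Invariant 1 fails, some improving
path starts at `u`. Cut it at its first vertex `w` with `odeg w < odeg u`, and take it inside the
old orientation whenever possible: then `odeg w = odeg u - 1` and every other vertex of the path
has out-degree `odeg u`, so after the flip all path vertices have out-degree `odeg u` and all other
degrees are unchanged. A walk of the flipped orientation either misses the path, and is then an
old walk, or first meets it at some `s`: the part before `s` is old, and everything after `s` was
reachable from `u` before the flip. This bounds both ends, except when `s = u` and the new edge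
is on the path; by the choice of the path, no old path from `u` is then improving, and the only
way out of `u` after the flip is along old edges into vertices the old orientation reaches from `u`.
-/

namespace List

variable {α : Type*} {R : α → α → Prop}

theorem mem_zip_tail_cons {a x y : α} {l : List α} :
    (x, y) ∈ (a :: l).zip l ↔ (x = a ∧ l.head? = some y) ∨ (x, y) ∈ l.zip l.tail := by
  cases l <;> simp [eq_comm]

theorem IsChain.rel_of_mem_zip_tail {l : List α} (hl : IsChain R l) {a b : α}
    (h : (a, b) ∈ l.zip l.tail) : R a b := by
  induction l with
  | nil => simp at h
  | cons c l ih =>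
    rw [tail_cons, mem_zip_tail_cons] at h
    rcases h with ⟨rfl, hb⟩ | h
    · obtain ⟨l', rfl⟩ := head?_eq_some_iff.1 hb
      exact (isChain_cons_cons.1 hl).1
    · exact ih hl.tail h

theorem mem_zip_tail_append_cons_left {l₁ l₂ : List α} {x y : α}
    (h : (l₁ ++ x :: l₂).Nodup) :
    (x, y) ∈ (l₁ ++ x :: l₂).zip (l₁ ++ x :: l₂).tail ↔ l₂.head? = some y := by
  induction l₁ with
  | nil =>
    rw [nil_append, nodup_cons] at h
    rw [nil_append, tail_cons, mem_zip_tail_cons]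
    simpa using or_iff_left fun h' => h.1 (of_mem_zip h').1
  | cons a l₁ ih =>
    rw [cons_append, nodup_cons] at h
    have hxa : x ≠ a := fun e => h.1 (e ▸ mem_append_right _ mem_cons_self)
    rw [cons_append, tail_cons, mem_zip_tail_cons, ← ih h.2]
    simp [hxa]

theorem mem_zip_tail_append_cons_right {l₁ l₂ : List α} {x y : α}
    (h : (l₁ ++ x :: l₂).Nodup) :
    (y, x) ∈ (l₁ ++ x :: l₂).zip (l₁ ++ x :: l₂).tail ↔ l₁.getLast? = some y := by
  induction l₁ with
  | nil =>
    rw [nil_append, nodup_cons] at h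
    rw [nil_append, tail_cons, mem_zip_tail_cons]
    simp only [getLast?_nil, reduceCtorEq, iff_false, not_or, not_and]
    exact ⟨fun _ hx => h.1 (mem_of_mem_head? hx),
      fun h' => h.1 (mem_of_mem_tail (of_mem_zip h').2)⟩
  | cons a l₁ ih =>
    rw [cons_append, nodup_cons] at h
    rw [cons_append, tail_cons, mem_zip_tail_cons, ih h.2]
    cases l₁ with
    | nil => simp [eq_comm]
    | cons b l₁ =>
      have hbx : b ≠ x := by
        rintro rfl
        exact (nodup_cons.1 (cons_append .. ▸ h.2)).1 (mem_append_right _ mem_cons_self)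
      simp [hbx]

end List

namespace Relation

variable {α : Type*} {r s : α → α → Prop} {a b : α}

theorem ReflTransGen.or_through_edge {u v : α}
    (hs : ∀ x y, s x y → r x y ∨ (x = u ∧ y = v))
    (h : ReflTransGen s a b) :
    ReflTransGen r a b ∨ (ReflTransGen r a u ∧ ReflTransGen r v b) := by
  induction h with
  | refl => exact .inl .refl
  | tail _ hbc ih =>
    rcases hs _ _ hbc with hr | ⟨rfl, rfl⟩
    · exact ih.imp (·.tail hr) fun h => ⟨h.1, h.2.tail hr⟩
    · exact .inr ⟨ih.elim id And.left, .refl⟩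

theorem ReflTransGen.avoid_or_first_hit (S : α → Prop) (h : ReflTransGen r a b) :
    (ReflTransGen (fun x y => r x y ∧ ¬ S x) a b ∧ ¬ S a ∧ ¬ S b) ∨
      ∃ c, S c ∧ ReflTransGen (fun x y => r x y ∧ ¬ S x) a c ∧ ReflTransGen r c b := by
  induction h with
  | refl =>
    by_cases ha : S a
    · exact .inr ⟨a, ha, .refl, .refl⟩
    · exact .inl ⟨.refl, ha, ha⟩
  | @tail b c _ hbc ih =>
    rcases ih with ⟨hab, ha, hb⟩ | ⟨d, hd, had, hdb⟩
    · by_cases hc : S c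
      · exact .inr ⟨c, hc, hab.tail ⟨hbc, hb⟩, .refl⟩
      · exact .inl ⟨hab.tail ⟨hbc, hb⟩, ha, hc⟩
    · exact .inr ⟨d, hd, had, hdb.tail hbc⟩

theorem ReflTransGen.exists_nodup_isChain_to_first {T : α → Prop} {x : α}
    (h : ReflTransGen r a x) (hx : T x) :
    ∃ l w, T w ∧ (∀ y ∈ l, ¬ T y) ∧ (l ++ [w]).Nodup ∧ List.IsChain r (l ++ [w]) ∧
      (l ++ [w]).head? = some a := by
  induction h using ReflTransGen.head_induction_on with
  | refl => exact ⟨[], x, hx, by simp, by simp, by simp, rfl⟩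
  | @head a b hab _ ih =>
    obtain ⟨l, w, hw, hl, hnd, hch, hhead⟩ := ih
    by_cases ha : T a
    · exact ⟨[], a, ha, by simp, by simp, by simp, rfl⟩
    by_cases hmem : a ∈ l
    · obtain ⟨l₁, l₂, rfl⟩ := List.append_of_mem hmem
      refine ⟨a :: l₂, w, hw, fun y hy => hl y (List.mem_append_right _ hy), ?_, ?_, rfl⟩
      · exact hnd.sublist (by simp)
      · exact hch.suffix (by simp)
    · have haw : a ≠ w := fun e => ha (e ▸ hw)
      refine ⟨a :: l, w, hw, ?_, ?_, ?_, rfl⟩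
      · exact List.forall_mem_cons.2 ⟨ha, hl⟩
      · exact List.nodup_cons.2 ⟨by simp [hmem, haw], hnd⟩
      · exact hch.cons (by simpa [hhead] using hab)

end Relation

theorem IsPathFrom.mono {V : Type*} {H H' : SimpleGraph V} {t : GraphOrientation H}
    {t' : GraphOrientation H'} (hle : ∀ a b, t.dir a b = true → t'.dir a b = true)
    {p : List V} {a b : V} (h : IsPathFrom t p a b) : IsPathFrom t' p a b :=
  ⟨⟨h.1.1, h.1.2.1, h.1.2.2.imp fun a b => hle a b⟩, h.2⟩

namespace GraphOrientation

variable {V : Type*} {H : SimpleGraph V}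

def Reach (t : GraphOrientation H) : V → V → Prop :=
  Relation.ReflTransGen fun a b => t.dir a b = true

theorem dir_eq_false_of_dir (t : GraphOrientation H) {a b : V} (h : t.dir a b = true) :
    t.dir b a = false :=
  Bool.eq_false_iff.2 ((t.exactly_one a b (t.dir_adj a b h)).1 h)

theorem _root_.IsPathFrom.reach {t : GraphOrientation H} {p : List V} {a b : V}
    (h : IsPathFrom t p a b) : t.Reach a b := by
  obtain ⟨⟨-, -, hch⟩, hhead, hlast⟩ := h
  obtain ⟨l, rfl⟩ := List.head?_eq_some_iff.1 hhead
  exact List.relationReflTransGen_of_exists_isChain_cons l hch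
    (Option.some.inj ((List.getLast?_eq_some_getLast _).symm.trans hlast))

theorem _root_.IsPathFrom.reach_of_mem {t : GraphOrientation H} {P : List V} {a b y : V}
    (hP : IsPathFrom t P a b) (hy : y ∈ P) : t.Reach a y := by
  obtain ⟨⟨-, -, hch⟩, hhead, -⟩ := hP
  obtain ⟨l, rfl⟩ := List.head?_eq_some_iff.1 hhead
  exact hch.induction (t.Reach a ·) _ (fun _ _ h hx => hx.tail h) (fun _ => .refl) y hy

theorem exists_isPathFrom_of_reach {t : GraphOrientation H} {T : V → Prop} {a x : V}
    (h : t.Reach a x) (hx : T x) (ha : ¬ T a) :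
    ∃ P w, IsPathFrom t P a w ∧ T w ∧ ∀ y ∈ P, y ≠ w → ¬ T y := by
  obtain ⟨l, w, hw, hl, hnd, hch, hhead⟩ := h.exists_nodup_isChain_to_first hx
  have hlen : 2 ≤ (l ++ [w]).length := by
    cases l with
    | nil => exact absurd (Option.some.inj hhead ▸ hw) ha
    | cons => simp
  exact ⟨l ++ [w], w, ⟨⟨hnd, hlen, hch⟩, hhead, List.getLast?_concat⟩, hw,
    fun y hy hyw => hl y (by simpa [hyw] using hy)⟩

theorem invariant1_iff [Fintype V] {t : GraphOrientation H} :
    Invariant1 t ↔ ∀ a b, t.Reach a b → t.outDeg a ≤ t.outDeg b + 1 := by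
  refine ⟨fun h a b hab => ?_, fun h p a b hp => h a b hp.reach⟩
  by_cases hba : a = b
  · subst hba
    omega
  obtain ⟨P, w, hp, rfl, -⟩ := exists_isPathFrom_of_reach (T := (· = b)) hab rfl hba
  exact h _ _ _ hp

variable [DecidableEq V]

def flipPath (t : GraphOrientation H) (P : List V) : GraphOrientation H where
  dir := flipDir t.dir P
  dir_adj a b h := by
    unfold flipDir at h
    split at h
    · exact (t.dir_adj b a h).symm
    · exact t.dir_adj a b h
  exactly_one a b hadj := by
    unfold flipDir
    by_cases hc : (a, b) ∈ P.zip P.tail ∨ (b, a) ∈ P.zip P.tail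
    · rw [if_pos hc, if_pos hc.symm]
      exact t.exactly_one b a hadj.symm
    · rw [if_neg hc, if_neg (mt Or.symm hc)]
      exact t.exactly_one a b hadj

@[simp]
theorem flipPath_dir (t : GraphOrientation H) (P : List V) :
    (t.flipPath P).dir = flipDir t.dir P :=
  rfl

end GraphOrientation

section FlipDir

variable {V : Type*} [DecidableEq V] (d : V → V → Bool) {P : List V} {x y : V}

theorem flipDir_of_not_mem_left (hx : x ∉ P) : flipDir d P x y = d x y :=
  if_neg <| by
    rintro (h | h)
    exacts [hx (List.of_mem_zip h).1, hx (List.mem_of_mem_tail (List.of_mem_zip h).2)]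

theorem flipDir_of_not_mem_right (hy : y ∉ P) : flipDir d P x y = d x y :=
  if_neg <| by
    rintro (h | h)
    exacts [hy (List.mem_of_mem_tail (List.of_mem_zip h).2), hy (List.of_mem_zip h).1]

variable [Fintype V]

theorem outDegF_flipDir_of_not_mem (hx : x ∉ P) : outDegF (flipDir d P) x = outDegF d x := by
  simp only [outDegF, flipDir_of_not_mem_left d hx]

theorem outDegF_flipDir_add {H : SimpleGraph V} (t : GraphOrientation H)
    (hP : List.IsChain (fun a b => t.dir a b = true) P) (x : V) :
    outDegF (flipDir t.dir P) x + #{y | (x, y) ∈ P.zip P.tail} =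
      outDegF t.dir x + #{y | (y, x) ∈ P.zip P.tail} := by
  unfold outDegF
  set N : Finset V := {y | t.dir x y = true}
  set S : Finset V := {y | (x, y) ∈ P.zip P.tail}
  set R : Finset V := {y | (y, x) ∈ P.zip P.tail}
  have hSN : S ⊆ N := fun y hy => by
    simpa [N] using hP.rel_of_mem_zip_tail (mem_filter.1 hy).2
  have hRN : Disjoint (N \ S) R := disjoint_left.2 fun y hyN hyR => by
    have := t.dir_eq_false_of_dir (hP.rel_of_mem_zip_tail (mem_filter.1 hyR).2)
    simp_all [N]
  have hflip : ({y | flipDir t.dir P x y = true} : Finset V) = (N \ S) ∪ R := by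
    ext y
    by_cases hS : (x, y) ∈ P.zip P.tail
    · have hyx := t.dir_eq_false_of_dir (hP.rel_of_mem_zip_tail hS)
      have hR : (y, x) ∉ P.zip P.tail := fun h => by
        simpa [hyx] using hP.rel_of_mem_zip_tail h
      simp_all [flipDir, N, S, R]
    · by_cases hR : (y, x) ∈ P.zip P.tail
      · simp_all [flipDir, N, S, R, hP.rel_of_mem_zip_tail hR]
      · simp_all [flipDir, N, S, R]
  rw [hflip, card_union_of_disjoint hRN, card_sdiff_of_subset hSN]
  have := card_le_card hSN
  omega

theorem card_filter_mem_zip_tail_left (hnd : P.Nodup) (hx : x ∈ P) :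
    #{y | (x, y) ∈ P.zip P.tail} = if P.getLast? = some x then 0 else 1 := by
  obtain ⟨P₁, P₂, rfl⟩ := List.append_of_mem hx
  simp only [List.mem_zip_tail_append_cons_left hnd]
  cases P₂ with
  | nil => simp
  | cons c P₂ =>
    have hlast : (c :: P₂).getLast? ≠ some x := fun h =>
      (List.nodup_cons.1 (List.nodup_append.1 hnd).2.1).1 (List.mem_of_getLast? h)
    rw [List.getLast?_append_cons, List.getLast?_cons_cons, if_neg hlast]
    simp [Finset.filter_eq]

theorem card_filter_mem_zip_tail_right (hnd : P.Nodup) (hx : x ∈ P) :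
    #{y | (y, x) ∈ P.zip P.tail} = if P.head? = some x then 0 else 1 := by
  obtain ⟨P₁, P₂, rfl⟩ := List.append_of_mem hx
  simp only [List.mem_zip_tail_append_cons_right hnd]
  cases P₁ with
  | nil => simp
  | cons a P₁ =>
    have hax : a ≠ x := fun h => (List.nodup_cons.1 hnd).1 (by simp [h])
    simp [hax, List.getLast?_eq_some_getLast, Finset.filter_eq]

theorem outDegF_flipDir_of_mem {H : SimpleGraph V} {t : GraphOrientation H} (hP : IsDirPath t P)
    (hx : x ∈ P) :
    outDegF (flipDir t.dir P) x + (if P.getLast? = some x then 0 else 1) =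
      outDegF t.dir x + (if P.head? = some x then 0 else 1) := by
  rw [← card_filter_mem_zip_tail_left hP.1 hx, ← card_filter_mem_zip_tail_right hP.1 hx]
  exact outDegF_flipDir_add t hP.2.2 x

end FlipDir

theorem outDegF_of_iff_or_edge {V : Type*} [Fintype V] [DecidableEq V] {d d' : V → V → Bool}
    {u v : V} (hd : ∀ a b, d' a b = true ↔ (d a b = true ∨ (a = u ∧ b = v)))
    (huv : d u v = false) (x : V) : outDegF d' x = outDegF d x + if x = u then 1 else 0 := by
  unfold outDegF
  split_ifs with hx
  · subst hx
    rw [← card_insert_of_notMem (s := {y | d x y = true}) (a := v) (by simp [huv])]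
    congr 1
    ext y
    by_cases hy : y = v <;> simp [hd, hy]
  · congr 1
    ext y
    simp [hd, hx]

namespace GraphOrientation

variable {V : Type*} {H H' : SimpleGraph V}

theorem reach_of_flipPath_reach [DecidableEq V] {t : GraphOrientation H} {P : List V}
    {a b y z : V} (hP : IsPathFrom t P a b) (hy : y ∈ P) (h : (t.flipPath P).Reach y z) :
    t.Reach a z := by
  induction h with
  | refl => exact hP.reach_of_mem hy
  | @tail c z _ hcz ih =>
    by_cases hz : z ∈ P
    · exact hP.reach_of_mem hz
    · rw [flipPath_dir, flipDir_of_not_mem_right _ hz] at hcz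
      exact ih.tail hcz

def IsInsertion (ot : GraphOrientation H') (o : GraphOrientation H) (u v : V) : Prop :=
  ∀ a b, ot.dir a b = true ↔ (o.dir a b = true ∨ (a = u ∧ b = v))

namespace IsInsertion

variable {o : GraphOrientation H} {ot : GraphOrientation H'} {u v : V} {P : List V} {w : V}

theorem reach {a b : V} (hot : ot.IsInsertion o u v) (h : o.Reach a b) : ot.Reach a b :=
  Relation.ReflTransGen.mono (fun x y hxy => (hot x y).2 (.inl hxy)) _ _ h

theorem reach_or {a b : V} (hot : ot.IsInsertion o u v) (h : ot.Reach a b) :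
    o.Reach a b ∨ (o.Reach a u ∧ o.Reach v b) :=
  h.or_through_edge fun x y hxy => (hot x y).1 hxy

theorem outDeg [Fintype V] [DecidableEq V] (hot : ot.IsInsertion o u v)
    (huv : o.dir u v = false) (x : V) : ot.outDeg x = o.outDeg x + if x = u then 1 else 0 :=
  outDegF_of_iff_or_edge hot huv x

theorem reach_last_of_mem_path (hot : ot.IsInsertion o u v) (hP : IsPathFrom ot P u w) {y : V}
    (hy : y ∈ P) (hyu : y ≠ u) : o.Reach y w := by
  obtain ⟨⟨hnd, -, hch⟩, hhead, hlast⟩ := hP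
  obtain ⟨P₁, P₂, rfl⟩ := List.append_of_mem hy
  have hu : u ∉ y :: P₂ := by
    cases P₁ with
    | nil => exact absurd (Option.some.inj hhead) hyu
    | cons a P₁ =>
      obtain rfl : a = u := Option.some.inj hhead
      exact fun h => (List.nodup_append.1 hnd).2.2 a List.mem_cons_self a h rfl
  have hch' : List.IsChain (fun a b => o.dir a b = true) (y :: P₂) :=
    (List.isChain_split.1 hch).2.imp_of_mem_imp fun a b ha _ hab =>
      ((hot a b).1 hab).resolve_right fun h => hu (h.1 ▸ ha)
  rw [List.getLast?_append_cons] at hlast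
  exact List.relationReflTransGen_of_exists_isChain_cons P₂ hch'
    (Option.some.inj ((List.getLast?_eq_some_getLast _).symm.trans hlast))

theorem dir_of_flipPath_dir [DecidableEq V] (hot : ot.IsInsertion o u v)
    (hP : IsPathFrom ot P u w) {x y : V} (hx : x ∉ P) (h : (ot.flipPath P).dir x y = true) :
    o.dir x y = true := by
  rw [flipPath_dir, flipDir_of_not_mem_left _ hx] at h
  exact ((hot x y).1 h).resolve_right fun h' => hx (h'.1 ▸ List.mem_of_mem_head? hP.2.1)

variable [Fintype V]

theorem outDeg_le_of_reach (hot : ot.IsInsertion o u v) (hinv : Invariant1 o)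
    (hdeg : o.outDeg u ≤ o.outDeg v) {x : V} (hx : ot.Reach u x) :
    o.outDeg u ≤ o.outDeg x + 1 := by
  rcases hot.reach_or hx with h | ⟨-, h⟩
  · exact invariant1_iff.1 hinv u x h
  · exact hdeg.trans (invariant1_iff.1 hinv v x h)

theorem exists_reach_lt_of_not_invariant1 [DecidableEq V] (hot : ot.IsInsertion o u v)
    (hinv : Invariant1 o) (huv : o.dir u v = false) (h : ¬ Invariant1 ot) :
    ∃ x, ot.Reach u x ∧ o.outDeg x < o.outDeg u := by
  rw [invariant1_iff] at h hinv
  push Not at h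
  obtain ⟨a, b, hab, hlt⟩ := h
  have ha := hot.outDeg huv a
  have hb := hot.outDeg huv b
  by_cases hau : a = u
  · subst hau
    refine ⟨b, hab, ?_⟩
    split_ifs at ha hb <;> omega
  · rw [if_neg hau] at ha
    rcases hot.reach_or hab with hab | ⟨hau', hvb⟩
    · have := hinv a b hab
      split_ifs at hb <;> omega
    · refine ⟨b, .head ((hot u v).2 (.inr ⟨rfl, rfl⟩)) (hot.reach hvb), ?_⟩
      have := hinv a u hau'
      split_ifs at hb <;> omega

theorem exists_repair_path [DecidableEq V] (hot : ot.IsInsertion o u v) (hinv : Invariant1 o)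
    (huv : o.dir u v = false) (h : ¬ Invariant1 ot) :
    ∃ P w, IsPathFrom ot P u w ∧ o.outDeg w < o.outDeg u ∧
      (∀ y ∈ P, y ≠ w → o.outDeg u ≤ o.outDeg y) ∧
      (o.Reach u w ∨ ∀ x, o.Reach u x → o.outDeg u ≤ o.outDeg x) := by
  by_cases hex : ∃ x, o.Reach u x ∧ o.outDeg x < o.outDeg u
  · obtain ⟨x, hux, hx⟩ := hex
    obtain ⟨P, w, hP, hw, hlow⟩ :=
      exists_isPathFrom_of_reach (T := (o.outDeg · < o.outDeg u)) hux hx (lt_irrefl _)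
    exact ⟨P, w, hP.mono fun a b h => (hot a b).2 (.inl h), hw,
      fun y hy hyw => not_lt.1 (hlow y hy hyw), .inl hP.reach⟩
  · push Not at hex
    obtain ⟨x, hux, hx⟩ := hot.exists_reach_lt_of_not_invariant1 hinv huv h
    obtain ⟨P, w, hP, hw, hlow⟩ :=
      exists_isPathFrom_of_reach (T := (o.outDeg · < o.outDeg u)) hux hx (lt_irrefl _)
    exact ⟨P, w, hP, hw, fun y hy hyw => not_lt.1 (hlow y hy hyw), .inr hex⟩

theorem outDeg_eq_of_mem_path (hot : ot.IsInsertion o u v) (hinv : Invariant1 o)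
    (hP : IsPathFrom ot P u w) (hw : o.outDeg w < o.outDeg u)
    (hlow : ∀ y ∈ P, y ≠ w → o.outDeg u ≤ o.outDeg y) {y : V} (hy : y ∈ P)
    (hyw : y ≠ w) :
    o.outDeg y = o.outDeg u := by
  refine le_antisymm ?_ (hlow y hy hyw)
  by_cases hyu : y = u
  · rw [hyu]
  · have := invariant1_iff.1 hinv y w (hot.reach_last_of_mem_path hP hy hyu)
    omega

theorem outDeg_flipPath [DecidableEq V] (hot : ot.IsInsertion o u v) (huv : o.dir u v = false)
    (hinv : Invariant1 o) (hdeg : o.outDeg u ≤ o.outDeg v) (hP : IsPathFrom ot P u w)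
    (hw : o.outDeg w < o.outDeg u) (hlow : ∀ y ∈ P, y ≠ w → o.outDeg u ≤ o.outDeg y)
    (y : V) :
    (ot.flipPath P).outDeg y = if y ∈ P then o.outDeg u else o.outDeg y := by
  have hdeg' := hot.outDeg huv y
  split_ifs with hy
  · have key := outDegF_flipDir_of_mem hP.1 hy
    rw [hP.2.1, hP.2.2] at key
    change (ot.flipPath P).outDeg y + _ = ot.outDeg y + _ at key
    simp only [Option.some.injEq, hdeg'] at key
    rcases eq_or_ne y w with rfl | hyw
    · have := hot.outDeg_le_of_reach hinv hdeg hP.reach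
      have hyu : y ≠ u := by rintro rfl; omega
      rw [if_pos rfl, if_neg hyu, if_neg (Ne.symm hyu)] at key
      omega
    · have := hot.outDeg_eq_of_mem_path hinv hP hw hlow hy hyw
      rw [if_neg (Ne.symm hyw)] at key
      rcases eq_or_ne y u with rfl | hyu
      · rw [if_pos rfl, if_pos rfl] at key
        omega
      · rw [if_neg hyu, if_neg (Ne.symm hyu)] at key
        omega
  · have hyu : y ≠ u := fun h => hy (h ▸ List.mem_of_mem_head? hP.2.1)
    rw [if_neg hyu] at hdeg'
    exact (outDegF_flipDir_of_not_mem _ hy).trans hdeg'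

theorem dir_of_flipPath_dir_head [DecidableEq V] (hot : ot.IsInsertion o u v)
    (hP : IsPathFrom ot P u w) (hw : o.outDeg w < o.outDeg u)
    (hfar : ∀ x, o.Reach u x → o.outDeg u ≤ o.outDeg x) {y : V}
    (h : (ot.flipPath P).dir u y = true) : o.dir u y = true := by
  obtain ⟨⟨hnd, hlen, hch⟩, hhead, -⟩ := id hP
  obtain ⟨_ | ⟨c, Q⟩, rfl⟩ := List.head?_eq_some_iff.1 hhead
  · simp at hlen
  have hcv : c = v := by
    by_contra hcv
    have huc : o.dir u c = true :=
      ((hot u c).1 (List.isChain_cons_cons.1 hch).1).resolve_right fun h => hcv h.2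
    have hcu : c ≠ u := fun h => (List.nodup_cons.1 hnd).1 (h ▸ List.mem_cons_self)
    have := hfar w (.head huc
      (hot.reach_last_of_mem_path hP (List.mem_cons_of_mem _ List.mem_cons_self) hcu))
    omega
  subst hcv
  have hnd' : ([] ++ u :: c :: Q).Nodup := hnd
  have hsucc := List.mem_zip_tail_append_cons_left (y := y) hnd'
  have hpred := List.mem_zip_tail_append_cons_right (y := y) hnd'
  simp only [List.nil_append, List.head?_cons, Option.some.injEq, List.getLast?_nil,
    reduceCtorEq, iff_false] at hsucc hpred
  simp only [flipPath_dir, flipDir, hsucc, hpred, or_false] at h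
  by_cases hyc : c = y
  · subst hyc
    rw [if_pos rfl, ot.dir_eq_false_of_dir ((hot u c).2 (.inr ⟨rfl, rfl⟩))] at h
    exact absurd h Bool.false_ne_true
  · rw [if_neg hyc] at h
    exact ((hot u y).1 h).resolve_right fun h => hyc h.2.symm

theorem reach_of_flipPath_reach_head [DecidableEq V] (hot : ot.IsInsertion o u v)
    (hP : IsPathFrom ot P u w) (hw : o.outDeg w < o.outDeg u)
    (hfar : ∀ x, o.Reach u x → o.outDeg u ≤ o.outDeg x) {b : V}
    (h : (ot.flipPath P).Reach u b) : o.Reach u b ∧ (b ∈ P → b = u) := by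
  induction h with
  | refl => exact ⟨.refl, fun _ => rfl⟩
  | @tail c b _ hcb ih =>
    obtain ⟨huc, hcP⟩ := ih
    have hcb' : o.dir c b = true := by
      by_cases hc : c ∈ P
      · rw [hcP hc] at hcb ⊢
        exact hot.dir_of_flipPath_dir_head hP hw hfar hcb
      · exact hot.dir_of_flipPath_dir hP hc hcb
    refine ⟨huc.tail hcb', fun hb => by_contra fun hbu => ?_⟩
    have := hfar w ((huc.tail hcb').trans (hot.reach_last_of_mem_path hP hb hbu))
    omega

theorem invariant1_flipPath [DecidableEq V] (hot : ot.IsInsertion o u v) (huv : o.dir u v = false)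
    (hinv : Invariant1 o) (hdeg : o.outDeg u ≤ o.outDeg v) (hP : IsPathFrom ot P u w)
    (hw : o.outDeg w < o.outDeg u) (hlow : ∀ y ∈ P, y ≠ w → o.outDeg u ≤ o.outDeg y)
    (hchoice : o.Reach u w ∨ ∀ x, o.Reach u x → o.outDeg u ≤ o.outDeg x) :
    Invariant1 (ot.flipPath P) := by
  have hreach : ∀ {a b}, Relation.ReflTransGen
      (fun x y => (ot.flipPath P).dir x y = true ∧ x ∉ P) a b → o.Reach a b :=
    fun h => Relation.ReflTransGen.mono (fun x y (hxy : _ ∧ x ∉ P) =>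
      hot.dir_of_flipPath_dir hP hxy.2 hxy.1) _ _ h
  have hinv' := invariant1_iff.1 hinv
  rw [invariant1_iff]
  intro a b hab
  simp only [hot.outDeg_flipPath huv hinv hdeg hP hw hlow]
  rcases hab.avoid_or_first_hit (· ∈ P) with ⟨hab, ha, hb⟩ | ⟨s, hs, has, hsb⟩
  · rw [if_neg ha, if_neg hb]
    exact hinv' a b (hreach hab)
  have hb : o.outDeg u ≤ (if b ∈ P then o.outDeg u else o.outDeg b) + 1 := by
    split_ifs
    · omega
    · exact hot.outDeg_le_of_reach hinv hdeg (reach_of_flipPath_reach hP hs hsb)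
  by_cases ha : a ∈ P
  · rwa [if_pos ha]
  rw [if_neg ha]
  have hw_le := hot.outDeg_le_of_reach hinv hdeg hP.reach
  rcases eq_or_ne s u with rfl | hsu
  · rcases hchoice with huw | hfar
    · have := hinv' a w ((hreach has).trans huw)
      omega
    · have := hinv' a s (hreach has)
      have := hfar b (hot.reach_of_flipPath_reach_head hP hw hfar hsb).1
      split_ifs <;> omega
  · have := hinv' a w ((hreach has).trans (hot.reach_last_of_mem_path hP hs hsu))
    omega

end IsInsertion

end GraphOrientation

theorem insert_one_flip_suffices_general {V : Type*} [Fintype V] [DecidableEq V]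
    {G : SimpleGraph V} (o : GraphOrientation G) (hinv : Invariant1 o)
    (u v : V) (hE : ¬ G.Adj u v) (hdeg : o.outDeg u ≤ o.outDeg v)
    (ot : GraphOrientation (addE G u v))
    (hot : ∀ a b, ot.dir a b = true ↔ (o.dir a b = true ∨ (a = u ∧ b = v))) :
    ∃ o' : GraphOrientation (addE G u v), Invariant1 o' ∧
      (o'.dir = ot.dir ∨
        ∃ P w, IsPathFrom ot P u w ∧ ot.outDeg w + 1 < ot.outDeg u ∧
          o'.dir = flipDir ot.dir P) := by
  have hot : ot.IsInsertion o u v := hot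
  have huv : o.dir u v = false := Bool.eq_false_iff.2 fun h => hE (o.dir_adj u v h)
  by_cases hgood : Invariant1 ot
  · exact ⟨ot, hgood, .inl rfl⟩
  obtain ⟨P, w, hP, hw, hlow, hchoice⟩ := hot.exists_repair_path hinv huv hgood
  refine ⟨ot.flipPath P, hot.invariant1_flipPath huv hinv hdeg hP hw hlow hchoice,
    .inr ⟨P, w, hP, ?_, rfl⟩⟩
  have hwu : w ≠ u := by
    rintro rfl
    exact lt_irrefl _ hw
  rw [hot.outDeg huv, hot.outDeg huv, if_neg hwu, if_pos rfl]
  omega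

/-- After inserting `{u,v}` (directed `(u,v)`) into an Invariant-1
orientation, there is an orientation of `G + {u,v}` satisfying Invariant 1 which is
either `G̃` itself or obtained from `G̃` by flipping a single improving path starting
at `u`: at most one improving-path flip restores an optimal Invariant-1 orientation. -/
theorem insert_one_flip_suffices {V : Type*} [Fintype V] [DecidableEq V]
    {G : SimpleGraph V} (o : GraphOrientation G) (hinv : Invariant1 o)
    (u v : V) (hne : u ≠ v) (hE : ¬ G.Adj u v) (hdeg : o.outDeg u ≤ o.outDeg v)
    (ot : GraphOrientation (addE G u v))
    (hot : ∀ a b, ot.dir a b = true ↔ (o.dir a b = true ∨ (a = u ∧ b = v))) :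
    ∃ o' : GraphOrientation (addE G u v), Invariant1 o' ∧
      (o'.dir = ot.dir ∨
        ∃ P w, IsPathFrom ot P u w ∧ ot.outDeg w + 1 < ot.outDeg u ∧
          o'.dir = flipDir ot.dir P) :=
  insert_one_flip_suffices_general o hinv u v hE hdeg ot hot
end

section
/- Let Ḡ be an orientation of a finite undirected simple graph G=(V,E) with maximum out-degree Δ satisfying Invariant 2 (no improving path starting at any vertex of out-degree Δ), let {u,v} ∉ E with odeg(u,Ḡ) ≤ odeg(v,Ḡ) and odeg(u,Ḡ) + 1 < Δ, and let G̃ be the orientation of G + {u,v} obtained from Ḡ by adding the directed edge (u,v). Then G̃ has maximum out-degree Δ and satisfies Invariant 2. -/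
open Finset

/-! Adding `(u, v)` raises only the out-degree of `u`, and keeps it below `Δ`, so `Δ` and the set of
vertices of out-degree `Δ` are unchanged. A directed path of the new orientation from such a vertex
either avoids `(u, v)`, and is then a path of the old orientation, or its prefix up to `u` is an old
path from a vertex of out-degree `Δ` to `u`, which would be improving since `odeg(u) + 1 < Δ`. -/

theorem List.IsChain.or_exists_prefix_getLast {α : Type*} {R : α → α → Prop} {x y : α} :
    ∀ {l : List α}, l.IsChain (fun a b => R a b ∨ a = x ∧ b = y) →
      l.IsChain R ∨ ∃ q, q <+: l ∧ q.IsChain R ∧ q.getLast? = some x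
  | [], _ => .inl .nil
  | [a], _ => .inl (.singleton a)
  | a :: b :: t, h => by
    obtain ⟨hab, hbt⟩ := List.isChain_cons_cons.mp h
    by_cases hR : R a b
    · rcases hbt.or_exists_prefix_getLast with hbt | ⟨_ | ⟨c, q⟩, hq, hqR, hqx⟩
      · exact .inl (hbt.cons_cons hR)
      · simp at hqx
      · obtain rfl : c = b := (List.cons_prefix_cons.mp hq).1
        exact .inr ⟨a :: c :: q, (List.prefix_cons_inj a).mpr hq, hqR.cons_cons hR, hqx⟩
    · obtain ⟨rfl, -⟩ := hab.resolve_left hR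
      exact .inr ⟨[a], by simp, .singleton a, rfl⟩

theorem IsPathFrom.or_exists_pathFrom_of_dir_iff {V : Type*} {G G' : SimpleGraph V}
    {o : GraphOrientation G} {o' : GraphOrientation G'} {u v a b : V} {p : List V}
    (hdir : ∀ a b, o'.dir a b = true ↔ o.dir a b = true ∨ a = u ∧ b = v)
    (hp : IsPathFrom o' p a b) (hau : a ≠ u) :
    IsPathFrom o p a b ∨ ∃ q, IsPathFrom o q a u := by
  obtain ⟨⟨hnd, hlen, hch⟩, hhead, hlast⟩ := hp
  simp only [hdir] at hch
  rcases List.IsChain.or_exists_prefix_getLast hch with hch | ⟨q, ⟨r, rfl⟩, hq, hqu⟩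
  · exact .inl ⟨⟨hnd, hlen, hch⟩, hhead, hlast⟩
  · refine .inr ⟨q, ⟨hnd.sublist (List.sublist_append_left q r), ?_, hq⟩, ?_, hqu⟩
    all_goals rcases q with _ | ⟨c, _ | ⟨d, q⟩⟩
    all_goals simp_all

section OutDegree

variable {V : Type*} [Fintype V] {d d' : V → V → Bool} {a : V}

theorem outDegF_congr (h : ∀ w, d a w = true ↔ d' a w = true) : outDegF d a = outDegF d' a := by
  simp only [outDegF, h]

theorem outDegF_mono (h : ∀ w, d a w = true → d' a w = true) : outDegF d a ≤ outDegF d' a :=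
  Finset.card_le_card fun w => by simpa only [Finset.mem_filter, Finset.mem_univ, true_and] using h w

theorem outDegF_le_succ {b : V} (h : ∀ w, d' a w = true → d a w = true ∨ w = b) :
    outDegF d' a ≤ outDegF d a + 1 := by
  classical
  calc outDegF d' a ≤ (insert b (univ.filter fun w => d a w = true)).card :=
        Finset.card_le_card fun w hw => by
          simpa [or_comm] using h w (Finset.mem_filter.mp hw).2
    _ ≤ outDegF d a + 1 := Finset.card_insert_le _ _

end OutDegree

theorem GraphOrientation.maxOutDeg_eq_of_le {V : Type*} [Fintype V] {G G' : SimpleGraph V}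
    {o : GraphOrientation G} {o' : GraphOrientation G'} (hle : ∀ a, o.outDeg a ≤ o'.outDeg a)
    (hmax : ∀ a, o'.outDeg a ≤ o.maxOutDeg) : o'.maxOutDeg = o.maxOutDeg :=
  le_antisymm (Finset.sup_le fun a _ => hmax a) (Finset.sup_mono_fun fun a _ => hle a)

theorem insert_small_keeps_invariant2_general {V : Type*} [Fintype V]
    {G : SimpleGraph V} (o : GraphOrientation G) (hinv : Invariant2 o)
    (u v : V)
    (hlt : o.outDeg u + 1 < o.maxOutDeg)
    (ot : GraphOrientation (addE G u v))
    (hot : ∀ a b, ot.dir a b = true ↔ (o.dir a b = true ∨ (a = u ∧ b = v))) :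
    ot.maxOutDeg = o.maxOutDeg ∧ Invariant2 ot := by
  have hle : ∀ a, o.outDeg a ≤ ot.outDeg a := fun a =>
    outDegF_mono fun w h => (hot a w).mpr (.inl h)
  have hu : ot.outDeg u ≤ o.outDeg u + 1 :=
    outDegF_le_succ fun w h => ((hot u w).mp h).imp_right And.right
  have hdeg_eq : ∀ a, a ≠ u → ot.outDeg a = o.outDeg a := fun a ha =>
    outDegF_congr fun w => by simp [hot, ha]
  have hmax : ot.maxOutDeg = o.maxOutDeg := by
    refine GraphOrientation.maxOutDeg_eq_of_le hle fun a => ?_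
    by_cases ha : a = u
    · subst ha; omega
    · exact (hdeg_eq a ha).trans_le (Finset.le_sup (Finset.mem_univ a))
  refine ⟨hmax, fun p a b hp ha => ?_⟩
  have hau : a ≠ u := by rintro rfl; omega
  have hoa : o.outDeg a = o.maxOutDeg := by rw [← hdeg_eq a hau, ha, hmax]
  rcases hp.or_exists_pathFrom_of_dir_iff hot hau with hp | ⟨q, hq⟩
  · have := hinv p a b hp hoa
    have := hle b
    omega
  · have := hinv q a u hq hoa
    omega

/-- Insert `{u,v} ∉ E` with `odeg(u) ≤ odeg(v)` and `odeg(u) + 1 < Δ`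
into an Invariant-2 orientation of maximum out-degree `Δ`, directed as `(u,v)`. Then
the resulting orientation `G̃` has maximum out-degree `Δ` and satisfies Invariant 2. -/
theorem insert_small_keeps_invariant2 {V : Type*} [Fintype V] [DecidableEq V]
    {G : SimpleGraph V} (o : GraphOrientation G) (hinv : Invariant2 o)
    (u v : V) (hne : u ≠ v) (hE : ¬ G.Adj u v) (hdeg : o.outDeg u ≤ o.outDeg v)
    (hlt : o.outDeg u + 1 < o.maxOutDeg)
    (ot : GraphOrientation (addE G u v))
    (hot : ∀ a b, ot.dir a b = true ↔ (o.dir a b = true ∨ (a = u ∧ b = v))) :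
    ot.maxOutDeg = o.maxOutDeg ∧ Invariant2 ot :=
  insert_small_keeps_invariant2_general o hinv u v hlt ot hot
end
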